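/- arXiv:2301.03851 — 4 statements merged into one kernel-verified Lean document; each statement's English description precedes it below -/
import Mathlib

section
/- Let p, q be polynomials with real coefficients in d variables such that p + i·q is not identically zero, and let z_{d+1} be a new indeterminate. Then p + i·q is stable (nonvanishing on the open upper poly-half-plane Π^d) if and only if the polynomial p(z) + z_{d+1}·q(z) in d+1 variables is real stable (nonvanishing on Π^{d+1}). -/
/-!
Write `f = p + i q` and `f* = p - i q`, so that `f (conj z) = conj (f* z)` as `p, q` are real.
Restricted to the line `ζ ↦ Re z + ζ Im z`, a stable `f` becomes a univariate polynomial with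
all roots in the closed lower half-plane, whence `‖f* z‖ ≤ ‖f z‖` on the upper poly-half-plane.
Since `2i (p + ω q) = (ω + i) f - (ω - i) f*` and `‖ω - i‖ < ‖ω + i‖` for `Im ω > 0`,
`p + ω q` cannot vanish there. Conversely, `ω = i` recovers `f`.
-/

open MvPolynomial Complex ComplexConjugate

lemma Complex.norm_conj_sub_le_norm_sub {ζ r : ℂ} (hζ : 0 ≤ ζ.im) (hr : r.im ≤ 0) :
    ‖conj ζ - r‖ ≤ ‖ζ - r‖ := by
  rw [← sq_le_sq₀ (norm_nonneg _) (norm_nonneg _), Complex.sq_norm, Complex.sq_norm,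
    normSq_apply, normSq_apply]
  simp only [sub_re, sub_im, conj_re, conj_im]
  nlinarith

lemma Complex.norm_sub_I_lt_norm_add_I {ω : ℂ} (hω : 0 < ω.im) : ‖ω - I‖ < ‖ω + I‖ := by
  rw [← sq_lt_sq₀ (norm_nonneg _) (norm_nonneg _), Complex.sq_norm, Complex.sq_norm,
    normSq_apply, normSq_apply]
  simp only [sub_re, sub_im, add_re, add_im, I_re, I_im]
  nlinarith

lemma Complex.add_mul_ne_zero_of_norm_sub_I_mul_le {P Q ω : ℂ} (hne : P + I * Q ≠ 0)
    (hle : ‖P - I * Q‖ ≤ ‖P + I * Q‖) (hω : 0 < ω.im) : P + ω * Q ≠ 0 := by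
  intro h
  have hcayley : (ω + I) * (P + I * Q) = (ω - I) * (P - I * Q) := by
    linear_combination (2 * I) * h
  have hpos : 0 < ‖P + I * Q‖ := norm_pos_iff.mpr hne
  refine lt_irrefl (‖ω + I‖ * ‖P + I * Q‖) ?_
  calc ‖ω + I‖ * ‖P + I * Q‖ = ‖ω - I‖ * ‖P - I * Q‖ := by
        rw [← norm_mul, ← norm_mul, hcayley]
    _ ≤ ‖ω - I‖ * ‖P + I * Q‖ := by gcongr
    _ < ‖ω + I‖ * ‖P + I * Q‖ := by gcongr; exact norm_sub_I_lt_norm_add_I hω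

/-- Each linear factor `ζ - ρ` of `D` is at least as large at `ζ` as at `conj ζ`. -/
lemma Polynomial.norm_eval_conj_le {D : Polynomial ℂ} (hroots : ∀ ρ ∈ D.roots, ρ.im ≤ 0)
    {ζ : ℂ} (hζ : 0 ≤ ζ.im) : ‖D.eval (conj ζ)‖ ≤ ‖D.eval ζ‖ := by
  have norm_prod (m : Multiset ℂ) : ‖m.prod‖ = (m.map (‖·‖)).prod := map_multiset_prod normHom m
  rw [(IsAlgClosed.splits D).eval_eq_prod_roots, (IsAlgClosed.splits D).eval_eq_prod_roots,
    norm_mul, norm_mul, norm_prod, norm_prod, Multiset.map_map, Multiset.map_map]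
  gcongr
  exact Multiset.prod_map_le_prod_map₀ _ _ (fun _ _ => norm_nonneg _)
    fun ρ hρ => norm_conj_sub_le_norm_sub hζ (hroots ρ hρ)

namespace MvPolynomial

variable {σ : Type*}

def IsStable (f : MvPolynomial σ ℂ) : Prop :=
  ∀ z : σ → ℂ, (∀ k, 0 < (z k).im) → eval z f ≠ 0

lemma eval_aeval_affine_line (f : MvPolynomial σ ℂ) (x y : σ → ℝ) (ζ : ℂ) :
    (aeval (fun k => Polynomial.C (x k : ℂ) + Polynomial.C (y k : ℂ) * Polynomial.X) f).eval ζ =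
      eval (fun k => (x k : ℂ) + y k * ζ) f := by
  rw [← Polynomial.coe_aeval_eq_eval, comp_aeval_apply, ← coe_aeval_eq_eval]
  simp

lemma IsStable.norm_eval_conj_le {f : MvPolynomial σ ℂ} (hf : f.IsStable)
    {z : σ → ℂ} (hz : ∀ k, 0 < (z k).im) :
    ‖eval (fun k => conj (z k)) f‖ ≤ ‖eval z f‖ := by
  set D := aeval (fun k => Polynomial.C ((z k).re : ℂ) + Polynomial.C ((z k).im : ℂ) *
    Polynomial.X) f
  have hD (ζ : ℂ) : D.eval ζ = eval (fun k => ((z k).re : ℂ) + (z k).im * ζ) f :=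
    eval_aeval_affine_line f _ _ ζ
  have hroots : ∀ ρ ∈ D.roots, ρ.im ≤ 0 := by
    intro ρ hρ
    by_contra! him
    refine hf _ (fun k => ?_) (by rw [← hD]; exact (Polynomial.mem_roots'.mp hρ).2)
    simpa using mul_pos (hz k) him
  have hI : (fun k => ((z k).re : ℂ) + (z k).im * I) = z := by
    funext k; exact re_add_im (z k)
  have hconj : (fun k => ((z k).re : ℂ) + (z k).im * conj I) = fun k => conj (z k) := by
    funext k; apply Complex.ext <;> simp
  simpa only [hD, hI, hconj] using Polynomial.norm_eval_conj_le hroots (ζ := I) (by simp)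

lemma aeval_conj (p : MvPolynomial σ ℝ) (z : σ → ℂ) :
    aeval (fun k => conj (z k)) p = conj (aeval z p) :=
  (comp_aeval_apply z conjAe.toAlgHom p).symm

lemma norm_aeval_sub_I_mul_le {p q : MvPolynomial σ ℝ}
    (hstab : ∀ z : σ → ℂ, (∀ k, 0 < (z k).im) → aeval z p + I * aeval z q ≠ 0)
    {z : σ → ℂ} (hz : ∀ k, 0 < (z k).im) :
    ‖aeval z p - I * aeval z q‖ ≤ ‖aeval z p + I * aeval z q‖ := by
  set f := map (algebraMap ℝ ℂ) p + C I * map (algebraMap ℝ ℂ) q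
  have hf (w : σ → ℂ) : eval w f = aeval w p + I * aeval w q := by
    simp only [f, map_add, map_mul, eval_C, ← eval₂_eq_eval_map, ← aeval_def]
  have hstable : f.IsStable := fun w hw => hf w ▸ hstab w hw
  have hconj : conj (aeval z p - I * aeval z q) = conj (aeval z p) + I * conj (aeval z q) := by
    simp
  simpa only [hf, aeval_conj, ← hconj, norm_conj] using hstable.norm_eval_conj_le hz

end MvPolynomial

theorem darlington_stmt0_general (d : ℕ) (p q : MvPolynomial (Fin d) ℝ) :
    (∀ z : Fin d → ℂ, (∀ k, 0 < (z k).im) →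
        MvPolynomial.eval z (MvPolynomial.map (algebraMap ℝ ℂ) p) +
          Complex.I * MvPolynomial.eval z (MvPolynomial.map (algebraMap ℝ ℂ) q) ≠ 0)
      ↔
    (∀ w : Fin (d + 1) → ℂ, (∀ k, 0 < (w k).im) →
        MvPolynomial.eval (w ∘ Fin.castSucc) (MvPolynomial.map (algebraMap ℝ ℂ) p) +
          w (Fin.last d) *
            MvPolynomial.eval (w ∘ Fin.castSucc) (MvPolynomial.map (algebraMap ℝ ℂ) q) ≠ 0) := by
  simp only [← eval₂_eq_eval_map, ← aeval_def]
  refine ⟨fun hstab w hw => ?_, fun hstab z hz => ?_⟩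
  · exact add_mul_ne_zero_of_norm_sub_I_mul_le (hstab _ fun k => hw _)
      (norm_aeval_sub_I_mul_le hstab fun k => hw _) (hw _)
  · have hsnoc : ∀ k, 0 < ((Fin.snoc z I : Fin (d + 1) → ℂ) k).im :=
      Fin.lastCases (by simp) (by simpa using hz)
    simpa [mul_comm] using hstab (Fin.snoc z I) hsnoc

/-- `p + i·q` (real polys in `d` variables) is stable on the upper
poly-half-plane iff the real polynomial `p(z) + z_{d+1}·q(z)` in `d+1` variables
is real stable. -/
theorem darlington_stmt0 (d : ℕ) (p q : MvPolynomial (Fin d) ℝ)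
    (hne : (MvPolynomial.map (algebraMap ℝ ℂ) p) + MvPolynomial.C Complex.I *
        (MvPolynomial.map (algebraMap ℝ ℂ) q) ≠ 0) :
    (∀ z : Fin d → ℂ, (∀ k, 0 < (z k).im) →
        MvPolynomial.eval z (MvPolynomial.map (algebraMap ℝ ℂ) p) +
          Complex.I * MvPolynomial.eval z (MvPolynomial.map (algebraMap ℝ ℂ) q) ≠ 0)
      ↔
    (∀ w : Fin (d + 1) → ℂ, (∀ k, 0 < (w k).im) →
        MvPolynomial.eval (w ∘ Fin.castSucc) (MvPolynomial.map (algebraMap ℝ ℂ) p) +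
          w (Fin.last d) *
            MvPolynomial.eval (w ∘ Fin.castSucc) (MvPolynomial.map (algebraMap ℝ ℂ) q) ≠ 0) :=
  darlington_stmt0_general d p q
end

section
/- Let p, q be coprime polynomials with real coefficients in d variables, both not identically zero. Then all nonzero polynomials in the pencil {α·p + β·q : α, β ∈ ℝ} are real stable if and only if either Im(p(z)/q(z)) ≥ 0 for all z ∈ Π^d, or Im(p(z)/q(z)) ≤ 0 for all z ∈ Π^d. -/
/-!
A member `α p + β q` with `α ≠ 0` vanishes at `z` exactly when `p(z)/q(z)` equals the real
number `-β/α`. If all nonzero members of the pencil are real stable, `q` is, and `Im (p/q)` can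
vanish somewhere on the convex set `Π^d` only if `p` is a real multiple of `q`; by the intermediate
value theorem it therefore keeps one sign. Conversely, if `Im (p/q) ≥ 0` on `Π^d`, a zero `z₀` of
`α p + β q` is a local minimum of `Im (p/q)`, so by the open mapping theorem `p/q` is constant near
`z₀` and `α p + β q` vanishes identically. The same argument applied to `-q/p`, which is defined
near a zero of `q` by coprimality, shows first that `q` has no zeros on `Π^d`.
-/

open MvPolynomial Complex Filter Topology

theorem AnalyticAt.eventually_eq_of_isLocalMin_im {E : Type*} [NormedAddCommGroup E]
    [NormedSpace ℂ E] {g : E → ℂ} {z₀ : E} (hg : AnalyticAt ℂ g z₀)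
    (hmin : IsLocalMin (fun z ↦ (g z).im) z₀) : ∀ᶠ z in 𝓝 z₀, g z = g z₀ := by
  refine hg.eventually_constant_or_nhds_le_map_nhds.resolve_right fun hopen ↦ ?_
  have : {w : ℂ | (g z₀).im ≤ w.im} ∈ 𝓝 (g z₀) := hopen hmin
  simpa using mem_interior_iff_mem_nhds.2 this

namespace RealStablePencil

variable {σ : Type*}

def polyUpperHalfPlane (σ : Type*) : Set (σ → ℂ) := {z | ∀ k, 0 < (z k).im}

def IsRealStable (r : MvPolynomial σ ℝ) : Prop :=
  ∀ z ∈ polyUpperHalfPlane σ, aeval z r ≠ 0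

theorem convex_polyUpperHalfPlane : Convex ℝ (polyUpperHalfPlane σ) := by
  simp only [polyUpperHalfPlane, Set.ofPred_forall]
  exact convex_iInter fun k ↦ (convex_halfSpace_im_gt 0).linear_preimage
    (LinearMap.proj k : (σ → ℂ) →ₗ[ℝ] ℂ)

theorem isOpen_polyUpperHalfPlane [Finite σ] : IsOpen (polyUpperHalfPlane σ) := by
  simp only [polyUpperHalfPlane, Set.ofPred_forall]
  exact isOpen_iInter_of_finite fun k ↦
    isOpen_lt continuous_const (continuous_im.comp (continuous_apply k))

theorem eval_map_algebraMap (z : σ → ℂ) (r : MvPolynomial σ ℝ) :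
    eval z (map (algebraMap ℝ ℂ) r) = aeval z r := by
  rw [eval_map, aeval_def]

theorem aeval_ne_zero_of_isCoprime {p q : MvPolynomial σ ℝ} (hcop : IsCoprime p q)
    (z : σ → ℂ) : aeval z p ≠ 0 ∨ aeval z q ≠ 0 := by
  by_contra! h
  have := hcop.map (aeval z).toRingHom
  simp only [AlgHom.toRingHom_eq_coe, RingHom.coe_coe, h.1, h.2] at this
  exact not_isCoprime_zero_zero this

theorem eq_smul_of_aeval_eq_mul {p q : MvPolynomial σ ℝ}
    (hstable : ∀ α β : ℝ, α • p + β • q ≠ 0 → IsRealStable (α • p + β • q))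
    {z : σ → ℂ} (hz : z ∈ polyUpperHalfPlane σ) {c : ℝ} (hc : aeval z p = c * aeval z q) :
    p = c • q := by
  by_contra hne
  refine hstable 1 (-c) ?_ z hz ?_
  · rwa [one_smul, neg_smul, ← sub_eq_add_neg, sub_ne_zero]
  · simp [hc, real_smul]

variable [Fintype σ]

theorem analyticOnNhd_aeval (r : MvPolynomial σ ℝ) :
    AnalyticOnNhd ℂ (fun z : σ → ℂ ↦ aeval z r) Set.univ :=
  AnalyticOnNhd.aeval_mvPolynomial (f := fun z ↦ z)
    (fun k ↦ (ContinuousLinearMap.proj (R := ℂ) (φ := fun _ : σ ↦ ℂ) k).analyticOnNhd _) r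

theorem eq_zero_of_aeval_eventuallyEq_zero {r : MvPolynomial σ ℝ} {z₀ : σ → ℂ}
    (h : (fun z ↦ aeval z r) =ᶠ[𝓝 z₀] 0) : r = 0 := by
  have hzero := (analyticOnNhd_aeval r).eqOn_zero_of_preconnected_of_eventuallyEq_zero
    isPreconnected_univ (Set.mem_univ z₀) h
  refine map_injective _ (algebraMap ℝ ℂ).injective (funext fun z ↦ ?_)
  rw [eval_map_algebraMap, map_zero, map_zero]
  exact hzero (Set.mem_univ z)

theorem eq_smul_of_isLocalMin_im_div {r s : MvPolynomial σ ℝ} {z₀ : σ → ℂ} {c : ℝ}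
    (hs : aeval z₀ s ≠ 0) (hc : aeval z₀ r = c * aeval z₀ s)
    (hmin : ∀ᶠ z in 𝓝 z₀, 0 ≤ (aeval z r / aeval z s).im) : r = c • s := by
  have hratio : aeval z₀ r / aeval z₀ s = c := by rw [hc, mul_div_cancel_right₀ _ hs]
  have hanalytic : AnalyticAt ℂ (fun z ↦ aeval z r / aeval z s) z₀ :=
    (analyticOnNhd_aeval r z₀ trivial).div (analyticOnNhd_aeval s z₀ trivial) hs
  have hconst := hanalytic.eventually_eq_of_isLocalMin_im
    (by simpa only [IsLocalMin, IsMinFilter, hratio, ofReal_im] using hmin)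
  have hs_near : ∀ᶠ z in 𝓝 z₀, aeval z s ≠ 0 :=
    (analyticOnNhd_aeval s z₀ trivial).continuousAt.eventually_ne hs
  rw [← sub_eq_zero]
  refine eq_zero_of_aeval_eventuallyEq_zero (z₀ := z₀) ?_
  filter_upwards [hconst, hs_near] with z hz hsz
  rw [hratio, div_eq_iff hsz] at hz
  simp [hz, Algebra.smul_def]

theorem isRealStable_of_im_div_nonneg {p q : MvPolynomial σ ℝ} (hcop : IsCoprime p q)
    (hq : q ≠ 0) (H : ∀ z ∈ polyUpperHalfPlane σ, 0 ≤ (aeval z p / aeval z q).im) :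
    IsRealStable q := by
  intro z₀ hz₀ hq₀
  have hp₀ : aeval z₀ p ≠ 0 :=
    (aeval_ne_zero_of_isCoprime hcop z₀).resolve_right (not_not.2 hq₀)
  have hmin : ∀ᶠ z in 𝓝 z₀, 0 ≤ (aeval z (-q) / aeval z p).im := by
    filter_upwards [isOpen_polyUpperHalfPlane.mem_nhds hz₀] with z hz
    rw [map_neg, neg_div, ← inv_div, neg_im, inv_im, neg_div, neg_neg]
    exact div_nonneg (H z hz) (normSq_nonneg _)
  have hneg : -q = (0 : ℝ) • p := eq_smul_of_isLocalMin_im_div hp₀ (by simp [hq₀]) hmin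
  exact hq (by simpa using hneg)

theorem isRealStable_pencil_of_im_div_nonneg {p q : MvPolynomial σ ℝ} (hcop : IsCoprime p q)
    (hq : q ≠ 0)
    (H : ∀ z ∈ polyUpperHalfPlane σ, aeval z q ≠ 0 → 0 ≤ (aeval z p / aeval z q).im)
    {α β : ℝ} (hne : α • p + β • q ≠ 0) : IsRealStable (α • p + β • q) := by
  -- where `q` vanishes, `p / q` is the junk value `0`
  have H' : ∀ z ∈ polyUpperHalfPlane σ, 0 ≤ (aeval z p / aeval z q).im := fun z hz ↦ by
    by_cases hqz : aeval z q = 0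
    · simp [hqz]
    · exact H z hz hqz
  have hq_ne := isRealStable_of_im_div_nonneg hcop hq H'
  intro z₀ hz₀ h₀
  rw [map_add, map_smul, map_smul, real_smul, real_smul] at h₀
  rcases eq_or_ne α 0 with rfl | hα
  · have hβ : β = 0 := by simpa [hq_ne z₀ hz₀] using h₀
    simp [hβ] at hne
  · have hp : p = (-β / α) • q := by
      refine eq_smul_of_isLocalMin_im_div (hq_ne z₀ hz₀) ?_
        (eventually_of_mem (isOpen_polyUpperHalfPlane.mem_nhds hz₀) H')
      have hα' : (α : ℂ) ≠ 0 := ofReal_ne_zero.2 hα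
      push_cast
      field_simp
      linear_combination h₀
    apply hne
    rw [hp, smul_smul, ← add_smul, mul_div_cancel₀ _ hα, neg_add_cancel, zero_smul]

theorem isRealStable_pencil_of_im_div_nonpos {p q : MvPolynomial σ ℝ} (hcop : IsCoprime p q)
    (hq : q ≠ 0)
    (H : ∀ z ∈ polyUpperHalfPlane σ, aeval z q ≠ 0 → (aeval z p / aeval z q).im ≤ 0)
    {α β : ℝ} (hne : α • p + β • q ≠ 0) : IsRealStable (α • p + β • q) := by
  have H' : ∀ z ∈ polyUpperHalfPlane σ, aeval z q ≠ 0 → 0 ≤ (aeval z (-p) / aeval z q).im :=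
    fun z hz hqz ↦ by simpa [neg_div] using H z hz hqz
  have hstable := isRealStable_pencil_of_im_div_nonneg hcop.neg_left hq H' (α := -α)
    (by rwa [neg_smul_neg])
  rwa [neg_smul_neg] at hstable

theorem im_div_nonneg_or_nonpos_of_isRealStable_pencil {p q : MvPolynomial σ ℝ} (hq : q ≠ 0)
    (hstable : ∀ α β : ℝ, α • p + β • q ≠ 0 → IsRealStable (α • p + β • q)) :
    (∀ z ∈ polyUpperHalfPlane σ, aeval z q ≠ 0 → 0 ≤ (aeval z p / aeval z q).im) ∨
      (∀ z ∈ polyUpperHalfPlane σ, aeval z q ≠ 0 → (aeval z p / aeval z q).im ≤ 0) := by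
  have hq_ne : IsRealStable q := by simpa using hstable 0 1 (by simpa using hq)
  by_contra! h
  obtain ⟨⟨z₁, hz₁, -, h₁⟩, ⟨z₂, hz₂, -, h₂⟩⟩ := h
  have hcont : ContinuousOn (fun z ↦ (aeval z p / aeval z q).im) (polyUpperHalfPlane σ) :=
    continuous_im.comp_continuousOn <|
      ((analyticOnNhd_aeval p).continuousOn.mono (Set.subset_univ _)).div
        ((analyticOnNhd_aeval q).continuousOn.mono (Set.subset_univ _)) hq_ne
  obtain ⟨z₃, hz₃, him⟩ := convex_polyUpperHalfPlane.isPreconnected.intermediate_value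
    hz₁ hz₂ hcont ⟨h₁.le, h₂.le⟩
  obtain ⟨c, hc⟩ : ∃ c : ℝ, aeval z₃ p = c * aeval z₃ q := by
    refine ⟨(aeval z₃ p / aeval z₃ q).re, ?_⟩
    rw [← div_eq_iff (hq_ne z₃ hz₃)]
    exact Complex.ext (by simp) (by simpa using him)
  obtain rfl : p = c • q := eq_smul_of_aeval_eq_mul hstable hz₃ hc
  simp [real_smul, mul_div_cancel_right₀ _ (hq_ne z₁ hz₁)] at h₁

end RealStablePencil

open RealStablePencil

theorem darlington_stmt2_general (d : ℕ) (p q : MvPolynomial (Fin d) ℝ)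
    (hcop : IsCoprime p q) (hq : q ≠ 0) :
    (∀ α β : ℝ, α • p + β • q ≠ 0 →
      ∀ z : Fin d → ℂ, (∀ k, 0 < (z k).im) →
        MvPolynomial.eval z (MvPolynomial.map (algebraMap ℝ ℂ) (α • p + β • q)) ≠ 0)
      ↔
    ((∀ z : Fin d → ℂ, (∀ k, 0 < (z k).im) →
        MvPolynomial.eval z (MvPolynomial.map (algebraMap ℝ ℂ) q) ≠ 0 →
        0 ≤ (MvPolynomial.eval z (MvPolynomial.map (algebraMap ℝ ℂ) p) /
              MvPolynomial.eval z (MvPolynomial.map (algebraMap ℝ ℂ) q)).im) ∨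
     (∀ z : Fin d → ℂ, (∀ k, 0 < (z k).im) →
        MvPolynomial.eval z (MvPolynomial.map (algebraMap ℝ ℂ) q) ≠ 0 →
        (MvPolynomial.eval z (MvPolynomial.map (algebraMap ℝ ℂ) p) /
              MvPolynomial.eval z (MvPolynomial.map (algebraMap ℝ ℂ) q)).im ≤ 0)) := by
  simp only [eval_map_algebraMap]
  refine ⟨im_div_nonneg_or_nonpos_of_isRealStable_pencil hq, ?_⟩
  rintro (H | H) α β hne
  · exact isRealStable_pencil_of_im_div_nonneg hcop hq H hne
  · exact isRealStable_pencil_of_im_div_nonpos hcop hq H hne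

/-- for coprime nonzero real polynomials `p, q`, all nonzero members
of the pencil `{α·p + β·q}` are real stable iff `Im (p/q)` has a constant sign
(≥ 0 everywhere, or ≤ 0 everywhere) on the upper poly-half-plane, the inequality
being understood at points where `q` does not vanish. -/
theorem darlington_stmt2 (d : ℕ) (p q : MvPolynomial (Fin d) ℝ)
    (hcop : IsCoprime p q) (hp : p ≠ 0) (hq : q ≠ 0) :
    (∀ α β : ℝ, α • p + β • q ≠ 0 →
      ∀ z : Fin d → ℂ, (∀ k, 0 < (z k).im) →
        MvPolynomial.eval z (MvPolynomial.map (algebraMap ℝ ℂ) (α • p + β • q)) ≠ 0)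
      ↔
    ((∀ z : Fin d → ℂ, (∀ k, 0 < (z k).im) →
        MvPolynomial.eval z (MvPolynomial.map (algebraMap ℝ ℂ) q) ≠ 0 →
        0 ≤ (MvPolynomial.eval z (MvPolynomial.map (algebraMap ℝ ℂ) p) /
              MvPolynomial.eval z (MvPolynomial.map (algebraMap ℝ ℂ) q)).im) ∨
     (∀ z : Fin d → ℂ, (∀ k, 0 < (z k).im) →
        MvPolynomial.eval z (MvPolynomial.map (algebraMap ℝ ℂ) q) ≠ 0 →
        (MvPolynomial.eval z (MvPolynomial.map (algebraMap ℝ ℂ) p) /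
              MvPolynomial.eval z (MvPolynomial.map (algebraMap ℝ ℂ) q)).im ≤ 0)) :=
  darlington_stmt2_general d p q hcop hq
end

section
/- (Generalized Darlington theorem.) For every rational ℂ^{m×m}-valued function f in the Nevanlinna class N_d^{m×m}, there exists a rational Cayley inner function g in the class IN_{d+1}^{m×m} (in d+1 variables) such that f(z) = g(z, i) for all z ∈ Π^d. Concretely, writing f = P/q with P, q coprime and defining P₁(z) = (P(z) − P(z̄)^*)/(2i), P₂(z) = (P(z) + P(z̄)^*)/2, q₁(z) = (q(z) − conj(q(z̄)))/(2i), q₂(z) = (q(z) + conj(q(z̄)))/2, the function g(z, z_{d+1}) = (z_{d+1}P₁(z) + P₂(z))/(z_{d+1}q₁(z) + q₂(z)) works. -/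
open MvPolynomial Complex Matrix
open scoped ComplexOrder

/-!
Write `p♯(z) = conj (p z̄)`. For `Im w > 0` put `a = (1 - i w) / 2`, `b = (1 + i w) / 2`, so that
`‖b‖ < ‖a‖` and `g(z, w) = (a P + b P♯ᵀ) / (a q + b q♯)`. At `w = i` we get `(a, b) = (1, 0)`, i.e.
`g(z, i) = f(z)`; at real points `b = ā` and `P♯ = P̄`, so `g` is Hermitian there.

Testing against a vector `v` reduces positivity of `Im g` to the scalar function `p / q` with
`p = v* P v`. By the Cayley transform, `Im (p / q) ≥ 0` means `|B| ≤ |A|` for `A = p + i q` and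
`B = p - i q`, and what has to be shown becomes `|a B + b A♯| ≤ |a A + b B♯|` on `Π^d`. Restricted to
the complex line through `z` and `z̄` this is a statement about one-variable polynomials. On the real
line it is the identity `|aα + bβ̄|² - |aβ + bᾱ|² = (|a|² - |b|²)(|α|² - |β|²)`, and it propagates to
the upper half-plane by a Phragmén–Lindelöf maximum principle for quotients of polynomials (after
cancelling common real zeros).
-/

open Filter Set
open scoped ComplexConjugate

lemma Complex.im_div_nonneg_iff (x y : ℂ) : 0 ≤ (x / y).im ↔ 0 ≤ (x * conj y).im := by
  rcases eq_or_ne y 0 with rfl | hy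
  · simp
  have : (x / y).im = (x * conj y).im / normSq y := by
    rw [div_im, mul_im, conj_re, conj_im]; ring
  rw [this, le_div_iff₀ (normSq_pos.2 hy), zero_mul]

lemma Complex.im_mul_conj_nonneg_iff (x y : ℂ) :
    0 ≤ (x * conj y).im ↔ ‖x - I * y‖ ≤ ‖x + I * y‖ := by
  rw [← pow_le_pow_iff_left₀ (norm_nonneg _) (norm_nonneg _) two_ne_zero, ← sub_nonneg,
    ← sub_nonneg (b := ‖x - I * y‖ ^ 2)]
  have : ‖x + I * y‖ ^ 2 - ‖x - I * y‖ ^ 2 = 4 * (x * conj y).im := by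
    simp only [Complex.sq_norm, normSq_apply, add_re, add_im, sub_re, sub_im, mul_re, mul_im,
      I_re, I_im, conj_re, conj_im]
    ring
  rw [this]
  constructor <;> intro h <;> linarith

lemma norm_mul_add_mul_conj_le {a b α β : ℂ} (hab : ‖b‖ ≤ ‖a‖) (hαβ : ‖β‖ ≤ ‖α‖) :
    ‖a * β + b * conj α‖ ≤ ‖a * α + b * conj β‖ := by
  have hid : ‖a * α + b * conj β‖ ^ 2 - ‖a * β + b * conj α‖ ^ 2
      = (‖a‖ ^ 2 - ‖b‖ ^ 2) * (‖α‖ ^ 2 - ‖β‖ ^ 2) := by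
    simp only [Complex.sq_norm, normSq_apply, add_re, add_im, mul_re, mul_im, conj_re, conj_im]
    ring
  refine (pow_le_pow_iff_left₀ (norm_nonneg _) (norm_nonneg _) two_ne_zero).1 ?_
  nlinarith [mul_nonneg (sub_nonneg.2 (pow_le_pow_left₀ (norm_nonneg _) hab 2))
    (sub_nonneg.2 (pow_le_pow_left₀ (norm_nonneg _) hαβ 2))]

lemma Complex.norm_one_add_I_mul_div_two_lt {w : ℂ} (hw : 0 < w.im) :
    ‖(1 + I * w) / 2‖ < ‖(1 - I * w) / 2‖ := by
  rw [norm_div, norm_div]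
  refine div_lt_div_of_pos_right ?_ (by simp)
  refine (pow_lt_pow_iff_left₀ (norm_nonneg _) (norm_nonneg _) two_ne_zero).1 ?_
  simp only [Complex.sq_norm, normSq_apply, add_re, add_im, sub_re, sub_im, mul_re, mul_im,
    one_re, one_im, I_re, I_im]
  nlinarith

lemma darlington_combination (w x y : ℂ) :
    w * ((2 * I)⁻¹ * (x - y)) + 2⁻¹ * (x + y) = (1 - I * w) / 2 * x + (1 + I * w) / 2 * y := by
  rw [mul_inv, inv_I]
  ring

lemma Polynomial.eval_map_conj (p : Polynomial ℂ) (z : ℂ) :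
    (p.map (starRingEnd ℂ)).eval z = conj (p.eval (conj z)) := by
  rw [Polynomial.eval_map, show p.eval (conj z) = p.eval₂ (RingHom.id ℂ) (conj z) from rfl,
    Polynomial.hom_eval₂]
  simp

lemma Polynomial.exists_norm_eval_le_mul_one_add_norm_pow {𝕜 : Type*} [NormedField 𝕜]
    (p : Polynomial 𝕜) : ∃ C, ∀ z : 𝕜, ‖p.eval z‖ ≤ C * (1 + ‖z‖) ^ p.natDegree := by
  refine ⟨∑ i ∈ Finset.range (p.natDegree + 1), ‖p.coeff i‖, fun z => ?_⟩
  rw [Polynomial.eval_eq_sum_range, Finset.sum_mul]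
  refine (norm_sum_le _ _).trans (Finset.sum_le_sum fun i hi => ?_)
  rw [norm_mul, norm_pow]
  gcongr
  calc ‖z‖ ^ i ≤ (1 + ‖z‖) ^ i := by gcongr; linarith
    _ ≤ _ := pow_le_pow_right₀ (by linarith [norm_nonneg z]) (Finset.mem_range_succ_iff.1 hi)

lemma Polynomial.exists_pos_le_norm_eval {s : Polynomial ℂ} {S : Set ℂ} (hS : IsClosed S)
    (hne : S.Nonempty) (hs : ∀ ζ ∈ S, s.eval ζ ≠ 0) : ∃ m > 0, ∀ ζ ∈ S, m ≤ ‖s.eval ζ‖ := by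
  obtain ⟨ζ₀, hζ₀⟩ := hne
  have hcoercive : ∀ᶠ ζ in cocompact ℂ ⊓ 𝓟 S, ‖s.eval ζ₀‖ ≤ ‖s.eval ζ‖ := by
    rcases lt_or_ge 0 s.degree with hdeg | hdeg
    · exact ((s.tendsto_norm_atTop hdeg tendsto_norm_cocompact_atTop).eventually_ge_atTop _)
        |>.filter_mono inf_le_left
    · rw [Polynomial.eq_C_of_degree_le_zero hdeg]
      simp
  obtain ⟨ζ₁, hζ₁, hmin⟩ := s.continuous.norm.continuousOn.exists_isMinOn' hS hζ₀ hcoercive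
  exact ⟨‖s.eval ζ₁‖, norm_pos_iff.2 (hs ζ₁ hζ₁), hmin⟩

lemma PhragmenLindelof.closed_upper_half_plane_of_bounded {f : ℂ → ℂ} {C M : ℝ}
    (hd : DifferentiableOn ℂ f {ζ | 0 ≤ ζ.im}) (hM : ∀ ζ : ℂ, 0 ≤ ζ.im → ‖f ζ‖ ≤ M)
    (hreal : ∀ x : ℝ, ‖f x‖ ≤ C) {ζ : ℂ} (hζ : 0 ≤ ζ.im) : ‖f ζ‖ ≤ C := by
  have hrot : ∀ ξ : ℂ, (I * ξ).im = ξ.re := by simp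
  have hF : DiffContOnCl ℂ (fun ξ => f (I * ξ)) {ξ | 0 < ξ.re} := by
    refine DifferentiableOn.diffContOnCl ?_
    rw [closure_setOfPred_lt_re]
    exact hd.comp (differentiableOn_id.const_mul I) fun ξ hξ => by simpa [hrot] using hξ
  have hbdd : ∀ ξ : ℂ, 0 ≤ ξ.re → ‖f (I * ξ)‖ ≤ M := fun ξ hξ => hM _ (by rwa [hrot])
  have := PhragmenLindelof.right_half_plane_of_bounded_on_real (C := C) (z := -I * ζ) hF
    ⟨1, one_lt_two, 0, Asymptotics.isBigO_iff.2 ⟨M, ?_⟩⟩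
    ⟨M, eventually_map.2 <| (eventually_ge_atTop 0).mono fun x hx => hbdd x (by simpa using hx)⟩
    (fun x => by simpa [mul_comm, ← mul_assoc] using hreal (-x)) (by simpa using hζ)
  · simpa [← mul_assoc] using this
  · exact eventually_inf_principal.2 <| .of_forall fun ξ hξ => by simpa using hbdd ξ (le_of_lt hξ)

lemma one_le_norm_one_sub_I_mul {ε : ℝ} {ζ : ℂ} (hε : 0 ≤ ε) (hζ : 0 ≤ ζ.im) :
    1 ≤ ‖1 - I * ε * ζ‖ :=
  le_trans (by simp; positivity) (re_le_norm _)

lemma mul_norm_le_norm_one_sub_I_mul {ε : ℝ} {ζ : ℂ} (hε : 0 ≤ ε) (hζ : 0 ≤ ζ.im) :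
    ε * ‖ζ‖ ≤ ‖1 - I * ε * ζ‖ := by
  refine (pow_le_pow_iff_left₀ (by positivity) (norm_nonneg _) two_ne_zero).1 ?_
  rw [mul_pow, Complex.sq_norm, Complex.sq_norm, normSq_apply, normSq_apply]
  simp only [sub_re, one_re, mul_re, I_re, ofReal_re, I_im, ofReal_im, sub_im, one_im, mul_im]
  nlinarith [mul_nonneg hε hζ]

lemma Polynomial.norm_eval_le_on_closed_upper_half_plane {n s : Polynomial ℂ}
    (hs : ∀ ζ : ℂ, 0 ≤ ζ.im → s.eval ζ ≠ 0)
    (hreal : ∀ x : ℝ, ‖n.eval (x : ℂ)‖ ≤ ‖s.eval (x : ℂ)‖) {ζ : ℂ} (hζ : 0 ≤ ζ.im) :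
    ‖n.eval ζ‖ ≤ ‖s.eval ζ‖ := by
  obtain ⟨C, hC⟩ := n.exists_norm_eval_le_mul_one_add_norm_pow
  have hC0 : 0 ≤ C := by simpa using (norm_nonneg _).trans (hC 0)
  obtain ⟨m, hm, hsm⟩ := s.exists_pos_le_norm_eval (isClosed_le continuous_const continuous_im)
    ⟨0, by simp⟩ hs
  set K := n.natDegree
  -- Dividing by `(1 - iεζ)^K`, of modulus `≥ 1` on the half-plane, makes `n / s` bounded there,
  -- so that Phragmén–Lindelöf applies; then let `ε → 0`.
  have hreg : ∀ ε : ℝ, 0 < ε → ‖n.eval ζ‖ ≤ ‖s.eval ζ‖ * ‖1 - I * ε * ζ‖ ^ K := by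
    intro ε hε
    have hden : ∀ ξ : ℂ, 0 ≤ ξ.im → 0 < ‖s.eval ξ‖ * ‖1 - I * ε * ξ‖ ^ K := fun ξ hξ =>
      mul_pos (norm_pos_iff.2 (hs ξ hξ))
        (pow_pos (one_pos.trans_le (one_le_norm_one_sub_I_mul hε.le hξ)) _)
    have hbound := PhragmenLindelof.closed_upper_half_plane_of_bounded
      (f := fun ξ => n.eval ξ / (s.eval ξ * (1 - I * ε * ξ) ^ K)) (C := 1)
      (M := C * (1 + ε⁻¹) ^ K / m) ?_ ?_ ?_ hζ
    · simp only [norm_div, norm_mul, norm_pow] at hbound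
      rwa [div_le_one (hden ζ hζ)] at hbound
    · refine fun ξ hξ => DifferentiableAt.differentiableWithinAt ?_
      refine (Polynomial.differentiable _).differentiableAt.div (by fun_prop) ?_
      exact fun h => (hden ξ hξ).ne' (by simpa using congrArg norm h)
    · intro ξ hξ
      simp only [norm_div, norm_mul, norm_pow]
      rw [div_le_iff₀ (hden ξ hξ)]
      have hr : 1 + ‖ξ‖ ≤ (1 + ε⁻¹) * ‖1 - I * ε * ξ‖ := by
        have h1 := one_le_norm_one_sub_I_mul hε.le hξ
        have h2 := mul_norm_le_norm_one_sub_I_mul hε.le hξ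
        have h3 : ‖ξ‖ ≤ ε⁻¹ * ‖1 - I * ε * ξ‖ := by
          rw [inv_mul_eq_div, le_div_iff₀ hε]; linarith
        linarith
      calc ‖n.eval ξ‖ ≤ C * (1 + ‖ξ‖) ^ K := hC ξ
        _ ≤ C * ((1 + ε⁻¹) ^ K * ‖1 - I * ε * ξ‖ ^ K) := by
            rw [← mul_pow]; gcongr
        _ = C * (1 + ε⁻¹) ^ K / m * (m * ‖1 - I * ε * ξ‖ ^ K) := by field_simp
        _ ≤ _ := by gcongr; exact hsm ξ hξ
    · intro x
      simp only [norm_div, norm_mul, norm_pow]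
      rw [div_le_one (hden x (by simp))]
      exact (hreal x).trans (le_mul_of_one_le_right (norm_nonneg _)
        (one_le_pow₀ (one_le_norm_one_sub_I_mul hε.le (by simp))))
  have hlim := le_on_closure (f := fun _ => ‖n.eval ζ‖)
    (g := fun ε : ℝ => ‖s.eval ζ‖ * ‖1 - I * ε * ζ‖ ^ K) (s := Ioi 0) hreg continuousOn_const
    (Continuous.continuousOn (by fun_prop)) (x := 0) (by simp)
  simpa using hlim
lemma Polynomial.forall_real_norm_eval_le_of_mul_X_sub_C {n s : Polynomial ℂ} (ρ : ℝ)
    (h : ∀ x : ℝ, ‖((X - C (ρ : ℂ)) * n).eval (x : ℂ)‖ ≤ ‖((X - C (ρ : ℂ)) * s).eval (x : ℂ)‖)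
    (x : ℝ) : ‖n.eval (x : ℂ)‖ ≤ ‖s.eval (x : ℂ)‖ := by
  have hne : ∀ y ∈ ({ρ}ᶜ : Set ℝ), ‖n.eval (y : ℂ)‖ ≤ ‖s.eval (y : ℂ)‖ := fun y hy => by
    have hpos : 0 < ‖(y : ℂ) - ρ‖ := norm_pos_iff.2 (sub_ne_zero.2 (by exact_mod_cast hy))
    simpa only [eval_mul, eval_sub, eval_X, eval_C, norm_mul, mul_le_mul_iff_right₀ hpos]
      using h y
  exact le_on_closure hne (Continuous.continuousOn (by fun_prop))
    (Continuous.continuousOn (by fun_prop)) (by simp)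

lemma Polynomial.norm_eval_le_on_upper_half_plane {n s : Polynomial ℂ}
    (hs : ∀ ζ : ℂ, 0 < ζ.im → s.eval ζ ≠ 0)
    (hreal : ∀ x : ℝ, ‖n.eval (x : ℂ)‖ ≤ ‖s.eval (x : ℂ)‖) {ζ : ℂ} (hζ : 0 < ζ.im) :
    ‖n.eval ζ‖ ≤ ‖s.eval ζ‖ := by
  induction hN : s.natDegree using Nat.strong_induction_on generalizing n s with
  | _ N ih =>
  by_cases hroot : ∃ ρ : ℝ, s.eval (ρ : ℂ) = 0
  · obtain ⟨ρ, hρ⟩ := hroot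
    have hnρ : n.eval (ρ : ℂ) = 0 := norm_le_zero_iff.1 (by simpa [hρ] using hreal ρ)
    obtain ⟨s₁, rfl⟩ := dvd_iff_isRoot.2 hρ
    obtain ⟨n₁, rfl⟩ := dvd_iff_isRoot.2 hnρ
    have hs₁ : ∀ ξ : ℂ, 0 < ξ.im → s₁.eval ξ ≠ 0 := fun ξ hξ h => hs ξ hξ (by simp [h])
    have hdeg : s₁.natDegree < N := by
      rw [← hN, natDegree_mul (X_sub_C_ne_zero _) fun h => hs₁ I (by simp) (by simp [h]),
        natDegree_X_sub_C]
      omega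
    simpa only [eval_mul, norm_mul] using mul_le_mul_of_nonneg_left
      (ih _ hdeg hs₁ (forall_real_norm_eval_le_of_mul_X_sub_C ρ hreal) rfl) (norm_nonneg _)
  · simp only [not_exists] at hroot
    refine norm_eval_le_on_closed_upper_half_plane (fun ξ hξ => ?_) hreal hζ.le
    rcases hξ.lt_or_eq with hξ | hξ
    · exact hs ξ hξ
    · rw [← re_add_im ξ, ← hξ, ofReal_zero, zero_mul, add_zero]
      exact hroot ξ.re

lemma Polynomial.norm_eval_ofReal_le {A B : Polynomial ℂ}
    (h : ∀ ζ : ℂ, 0 < ζ.im → ‖B.eval ζ‖ ≤ ‖A.eval ζ‖) (x : ℝ) :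
    ‖B.eval (x : ℂ)‖ ≤ ‖A.eval (x : ℂ)‖ :=
  le_on_closure (s := {ζ : ℂ | 0 < ζ.im}) (x := (x : ℂ)) h
    (Continuous.continuousOn (by fun_prop)) (Continuous.continuousOn (by fun_prop))
    (by simp [closure_setOfPred_lt_im])

lemma Polynomial.norm_eval_map_conj_le {A B : Polynomial ℂ}
    (hA : ∀ ζ : ℂ, 0 < ζ.im → A.eval ζ ≠ 0) (hBA : ∀ ζ : ℂ, 0 < ζ.im → ‖B.eval ζ‖ ≤ ‖A.eval ζ‖)
    {ζ : ℂ} (hζ : 0 < ζ.im) : ‖(B.map (starRingEnd ℂ)).eval ζ‖ ≤ ‖A.eval ζ‖ :=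
  norm_eval_le_on_upper_half_plane hA (fun x => by
    simpa [eval_map_conj] using norm_eval_ofReal_le hBA x) hζ

lemma Polynomial.eval_add_map_conj_ne_zero {A B : Polynomial ℂ}
    (hA : ∀ ζ : ℂ, 0 < ζ.im → A.eval ζ ≠ 0) (hBA : ∀ ζ : ℂ, 0 < ζ.im → ‖B.eval ζ‖ ≤ ‖A.eval ζ‖)
    {a b : ℂ} (hab : ‖b‖ < ‖a‖) {ζ : ℂ} (hζ : 0 < ζ.im) :
    (C a * A + C b * B.map (starRingEnd ℂ)).eval ζ ≠ 0 := by
  rw [eval_add, eval_mul, eval_mul, eval_C, eval_C]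
  refine fun h => (?_ : ‖b * (B.map (starRingEnd ℂ)).eval ζ‖ < ‖a * A.eval ζ‖).ne ?_
  · rw [norm_mul, norm_mul]
    exact mul_lt_mul_of_lt_of_le_of_nonneg_of_pos hab (norm_eval_map_conj_le hA hBA hζ)
      (norm_nonneg _) (norm_pos_iff.2 (hA ζ hζ))
  · rw [eq_neg_of_add_eq_zero_left h, norm_neg]

lemma Polynomial.norm_eval_add_map_conj_le {A B : Polynomial ℂ}
    (hA : ∀ ζ : ℂ, 0 < ζ.im → A.eval ζ ≠ 0) (hBA : ∀ ζ : ℂ, 0 < ζ.im → ‖B.eval ζ‖ ≤ ‖A.eval ζ‖)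
    {a b : ℂ} (hab : ‖b‖ < ‖a‖) {ζ : ℂ} (hζ : 0 < ζ.im) :
    ‖(C a * B + C b * A.map (starRingEnd ℂ)).eval ζ‖
      ≤ ‖(C a * A + C b * B.map (starRingEnd ℂ)).eval ζ‖ :=
  norm_eval_le_on_upper_half_plane (fun ξ hξ => eval_add_map_conj_ne_zero hA hBA hab hξ)
    (fun x => by simpa [eval_map_conj] using
      norm_mul_add_mul_conj_le hab.le (norm_eval_ofReal_le hBA x)) hζ

section SeveralVariables

variable {σ : Type*}

lemma MvPolynomial.eval_map_conj (p : MvPolynomial σ ℂ) (z : σ → ℂ) :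
    eval z (map (starRingEnd ℂ) p) = conj (eval (fun k => conj (z k)) p) := by
  rw [eval_map, show eval (fun k => conj (z k)) p = eval₂ (RingHom.id ℂ) (fun k => conj (z k)) p
    from rfl, eval₂_comp_left (starRingEnd ℂ)]
  simp [Function.comp_def]

noncomputable def MvPolynomial.sliceAt (z : σ → ℂ) (p : MvPolynomial σ ℂ) :
    Polynomial ℂ :=
  aeval (fun k => Polynomial.C ((z k).re : ℂ) + Polynomial.C ((z k).im : ℂ) * Polynomial.X) p

lemma MvPolynomial.eval_sliceAt (z : σ → ℂ) (p : MvPolynomial σ ℂ) (ζ : ℂ) :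
    (sliceAt z p).eval ζ = eval (fun k => ((z k).re : ℂ) + (z k).im * ζ) p := by
  induction p using MvPolynomial.induction_on with
  | C a => simp [sliceAt]
  | add p q hp hq => simp_all [sliceAt]
  | mul_X p k hp => simp_all [sliceAt]

lemma MvPolynomial.eval_sliceAt_I (z : σ → ℂ) (p : MvPolynomial σ ℂ) :
    (sliceAt z p).eval I = eval z p := by
  simp only [eval_sliceAt, re_add_im]

lemma MvPolynomial.eval_sliceAt_neg_I (z : σ → ℂ) (p : MvPolynomial σ ℂ) :
    (sliceAt z p).eval (-I) = eval (fun k => conj (z k)) p := by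
  rw [eval_sliceAt]
  congr 2 with k
  apply Complex.ext <;> simp

lemma MvPolynomial.im_sliceAt_pos {z : σ → ℂ} (hz : ∀ k, 0 < (z k).im) {ζ : ℂ}
    (hζ : 0 < ζ.im) (k : σ) : 0 < (((z k).re : ℂ) + (z k).im * ζ).im := by
  simpa using mul_pos (hz k) hζ

variable {A B : MvPolynomial σ ℂ} {z : σ → ℂ}

lemma MvPolynomial.eval_sliceAt_ne_zero (hA : ∀ y : σ → ℂ, (∀ k, 0 < (y k).im) → eval y A ≠ 0)
    (hz : ∀ k, 0 < (z k).im) (ζ : ℂ) (hζ : 0 < ζ.im) : (sliceAt z A).eval ζ ≠ 0 := by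
  rw [eval_sliceAt]; exact hA _ (im_sliceAt_pos hz hζ)

lemma MvPolynomial.norm_eval_sliceAt_le
    (hBA : ∀ y : σ → ℂ, (∀ k, 0 < (y k).im) → ‖eval y B‖ ≤ ‖eval y A‖)
    (hz : ∀ k, 0 < (z k).im) (ζ : ℂ) (hζ : 0 < ζ.im) :
    ‖(sliceAt z B).eval ζ‖ ≤ ‖(sliceAt z A).eval ζ‖ := by
  rw [eval_sliceAt, eval_sliceAt]; exact hBA _ (im_sliceAt_pos hz hζ)

lemma MvPolynomial.mul_eval_add_mul_eval_map_conj_ne_zero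
    (hA : ∀ y : σ → ℂ, (∀ k, 0 < (y k).im) → eval y A ≠ 0)
    (hBA : ∀ y : σ → ℂ, (∀ k, 0 < (y k).im) → ‖eval y B‖ ≤ ‖eval y A‖)
    {a b : ℂ} (hab : ‖b‖ < ‖a‖) (hz : ∀ k, 0 < (z k).im) :
    a * eval z A + b * eval z (map (starRingEnd ℂ) B) ≠ 0 := by
  rw [eval_map_conj, ← eval_sliceAt_I z A, ← eval_sliceAt_neg_I]
  simpa [Polynomial.eval_map_conj] using Polynomial.eval_add_map_conj_ne_zero
    (eval_sliceAt_ne_zero hA hz) (norm_eval_sliceAt_le hBA hz) hab (ζ := I) (by simp)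

lemma MvPolynomial.norm_mul_eval_add_mul_eval_map_conj_le
    (hA : ∀ y : σ → ℂ, (∀ k, 0 < (y k).im) → eval y A ≠ 0)
    (hBA : ∀ y : σ → ℂ, (∀ k, 0 < (y k).im) → ‖eval y B‖ ≤ ‖eval y A‖)
    {a b : ℂ} (hab : ‖b‖ < ‖a‖) (hz : ∀ k, 0 < (z k).im) :
    ‖a * eval z B + b * eval z (map (starRingEnd ℂ) A)‖
      ≤ ‖a * eval z A + b * eval z (map (starRingEnd ℂ) B)‖ := by
  rw [eval_map_conj, eval_map_conj, ← eval_sliceAt_I z A, ← eval_sliceAt_I z B,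
    ← eval_sliceAt_neg_I, ← eval_sliceAt_neg_I]
  simpa [Polynomial.eval_map_conj] using Polynomial.norm_eval_add_map_conj_le
    (eval_sliceAt_ne_zero hA hz) (norm_eval_sliceAt_le hBA hz) hab (ζ := I) (by simp)

theorem MvPolynomial.im_div_nonneg_of_nevanlinna {p q : MvPolynomial σ ℂ}
    (hq : ∀ y : σ → ℂ, (∀ k, 0 < (y k).im) → eval y q ≠ 0)
    (hpq : ∀ y : σ → ℂ, (∀ k, 0 < (y k).im) → 0 ≤ (eval y p / eval y q).im)
    {a b : ℂ} (hab : ‖b‖ < ‖a‖) {z : σ → ℂ} (hz : ∀ k, 0 < (z k).im) :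
    0 ≤ ((a * eval z p + b * eval z (map (starRingEnd ℂ) p)) /
      (a * eval z q + b * eval z (map (starRingEnd ℂ) q))).im := by
  set A := p + C I * q
  set B := p - C I * q
  have hBA : ∀ y : σ → ℂ, (∀ k, 0 < (y k).im) → ‖eval y B‖ ≤ ‖eval y A‖ := fun y hy => by
    simp only [A, B, map_add, map_sub, map_mul, eval_C]
    exact (im_mul_conj_nonneg_iff _ _).1 ((im_div_nonneg_iff _ _).1 (hpq y hy))
  have hA : ∀ y : σ → ℂ, (∀ k, 0 < (y k).im) → eval y A ≠ 0 := fun y hy hAy => by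
    have hBy : eval y B = 0 := norm_le_zero_iff.1 (by simpa [hAy] using hBA y hy)
    refine hq y hy ?_
    have : eval y A - eval y B = 2 * I * eval y q := by simp [A, B]; ring
    simpa [hAy, hBy, I_ne_zero] using this.symm
  have key := norm_mul_eval_add_mul_eval_map_conj_le hA hBA hab hz
  rw [im_div_nonneg_iff, im_mul_conj_nonneg_iff]
  convert key using 2 <;> simp [A, B] <;> ring

end SeveralVariables

section QuadraticForms

variable {ι σ : Type*} [Fintype ι]

lemma Matrix.star_dotProduct_conjTranspose_mulVec (G : Matrix ι ι ℂ) (v : ι → ℂ) :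
    star v ⬝ᵥ Gᴴ *ᵥ v = conj (star v ⬝ᵥ G *ᵥ v) := by
  simp only [dotProduct, mulVec, conjTranspose_apply, Pi.star_apply, map_sum, map_mul,
    Finset.mul_sum, RCLike.star_def, conj_conj]
  rw [Finset.sum_comm]
  exact Finset.sum_congr rfl fun i _ => Finset.sum_congr rfl fun j _ => by ring

lemma Matrix.posSemidef_imPart_iff (G : Matrix ι ι ℂ) :
    (((2 * I)⁻¹ : ℂ) • (G - Gᴴ)).PosSemidef ↔ ∀ v, 0 ≤ (star v ⬝ᵥ G *ᵥ v).im := by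
  have hherm : (((2 * I)⁻¹ : ℂ) • (G - Gᴴ)).IsHermitian := by
    have : ((2 * I)⁻¹ : ℂ) • (G - Gᴴ) = ((2 * I)⁻¹ : ℂ) • G + (((2 * I)⁻¹ : ℂ) • G)ᴴ := by
      rw [conjTranspose_smul, smul_sub, sub_eq_add_neg, ← neg_smul]
      congr 2
      simp [star_inv₀]
    rw [this]
    exact isHermitian_add_transpose_self _
  have hquad : ∀ v, star v ⬝ᵥ (((2 * I)⁻¹ : ℂ) • (G - Gᴴ)) *ᵥ v = (star v ⬝ᵥ G *ᵥ v).im := by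
    intro v
    rw [smul_mulVec, dotProduct_smul, sub_mulVec, dotProduct_sub,
      star_dotProduct_conjTranspose_mulVec, sub_conj, smul_eq_mul]
    push_cast
    field_simp
  simp only [posSemidef_iff_dotProduct_mulVec, hherm, hquad, true_and, zero_le_real]

noncomputable def Matrix.quadPoly (P : Matrix ι ι (MvPolynomial σ ℂ)) (v : ι → ℂ) :
    MvPolynomial σ ℂ :=
  ∑ i, ∑ j, C (conj (v i) * v j) * P i j

lemma Matrix.eval_quadPoly (P : Matrix ι ι (MvPolynomial σ ℂ)) (v : ι → ℂ) (y : σ → ℂ) :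
    eval y (quadPoly P v) = star v ⬝ᵥ (of fun i j => eval y (P i j)) *ᵥ v := by
  simp only [quadPoly, map_sum, map_mul, eval_C, dotProduct, mulVec, of_apply, Pi.star_apply,
    RCLike.star_def, Finset.mul_sum]
  exact Finset.sum_congr rfl fun i _ => Finset.sum_congr rfl fun j _ => by ring

lemma Matrix.eval_map_conj_quadPoly (P : Matrix ι ι (MvPolynomial σ ℂ)) (v : ι → ℂ)
    (y : σ → ℂ) : eval y (MvPolynomial.map (starRingEnd ℂ) (quadPoly P v))
      = star v ⬝ᵥ (of fun i j => eval y (MvPolynomial.map (starRingEnd ℂ) (P j i))) *ᵥ v := by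
  simp only [quadPoly, map_sum, map_mul, MvPolynomial.map_C, eval_C, dotProduct, mulVec, of_apply,
    Pi.star_apply, RCLike.star_def, Finset.mul_sum, conj_conj]
  rw [Finset.sum_comm]
  exact Finset.sum_congr rfl fun i _ => Finset.sum_congr rfl fun j _ => by ring

end QuadraticForms

section DarlingtonValue

variable {ι σ : Type*}

/-- With `a = (1 - i w) / 2` and `b = (1 + i w) / 2` this is Darlington's `g(z, w)`. -/
noncomputable def darlingtonValue (P : Matrix ι ι (MvPolynomial σ ℂ)) (q : MvPolynomial σ ℂ)
    (z : σ → ℂ) (a b : ℂ) : Matrix ι ι ℂ :=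
  (a * eval z q + b * eval z (map (starRingEnd ℂ) q))⁻¹ •
    (a • of (fun i j => eval z (P i j)) + b • of fun i j => eval z (map (starRingEnd ℂ) (P j i)))

lemma darlingtonValue_one_zero (P : Matrix ι ι (MvPolynomial σ ℂ)) (q : MvPolynomial σ ℂ)
    (z : σ → ℂ) : darlingtonValue P q z 1 0 = (eval z q)⁻¹ • of fun i j => eval z (P i j) := by
  simp [darlingtonValue]

lemma isHermitian_darlingtonValue_real (P : Matrix ι ι (MvPolynomial σ ℂ))
    (q : MvPolynomial σ ℂ) (x : σ → ℝ) (a : ℂ) :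
    (darlingtonValue P q (fun k => (x k : ℂ)) a (conj a)).IsHermitian := by
  set M : Matrix ι ι ℂ := a • of fun i j => eval (fun k => (x k : ℂ)) (P i j)
  have hreal : ∀ p : MvPolynomial σ ℂ, eval (fun k => (x k : ℂ)) (map (starRingEnd ℂ) p)
      = conj (eval (fun k => (x k : ℂ)) p) := fun p => by simp only [eval_map_conj, conj_ofReal]
  have : darlingtonValue P q (fun k => (x k : ℂ)) a (conj a)
      = (a * eval (fun k => (x k : ℂ)) q + star (a * eval (fun k => (x k : ℂ)) q))⁻¹ • (M + Mᴴ) := by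
    rw [darlingtonValue, hreal]
    congr 2
    · simp
    · ext i j; simp [M, hreal]
  rw [this]
  refine (isHermitian_add_transpose_self M).smul ?_
  exact (IsSelfAdjoint.add_star_self _).inv₀

lemma star_dotProduct_darlingtonValue_mulVec [Fintype ι] (P : Matrix ι ι (MvPolynomial σ ℂ))
    (q : MvPolynomial σ ℂ) (z : σ → ℂ) (a b : ℂ) (v : ι → ℂ) :
    star v ⬝ᵥ darlingtonValue P q z a b *ᵥ v
      = (a * eval z (quadPoly P v) + b * eval z (map (starRingEnd ℂ) (quadPoly P v))) /
        (a * eval z q + b * eval z (map (starRingEnd ℂ) q)) := by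
  rw [darlingtonValue, smul_mulVec, dotProduct_smul, add_mulVec, dotProduct_add, smul_mulVec,
    smul_mulVec, dotProduct_smul, dotProduct_smul, eval_quadPoly, eval_map_conj_quadPoly,
    smul_eq_mul, smul_eq_mul, smul_eq_mul, inv_mul_eq_div]

lemma posSemidef_imPart_darlingtonValue [Fintype ι] {P : Matrix ι ι (MvPolynomial σ ℂ)}
    {q : MvPolynomial σ ℂ} (hq : ∀ y : σ → ℂ, (∀ k, 0 < (y k).im) → eval y q ≠ 0)
    (hpos : ∀ y : σ → ℂ, (∀ k, 0 < (y k).im) →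
      (((2 * I)⁻¹ : ℂ) • ((eval y q)⁻¹ • (of fun i j => eval y (P i j)) -
        ((eval y q)⁻¹ • of fun i j => eval y (P i j))ᴴ)).PosSemidef)
    {a b : ℂ} (hab : ‖b‖ < ‖a‖) {z : σ → ℂ} (hz : ∀ k, 0 < (z k).im) :
    (((2 * I)⁻¹ : ℂ) •
      (darlingtonValue P q z a b - (darlingtonValue P q z a b)ᴴ)).PosSemidef := by
  refine (posSemidef_imPart_iff _).2 fun v => ?_
  rw [star_dotProduct_darlingtonValue_mulVec]
  refine im_div_nonneg_of_nevanlinna hq (fun y hy => ?_) hab hz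
  simpa only [smul_mulVec, dotProduct_smul, smul_eq_mul, inv_mul_eq_div, eval_quadPoly]
    using (posSemidef_imPart_iff _).1 (hpos y hy) v

end DarlingtonValue

theorem darlington_stmt8_general (d m : ℕ)
    (P : Matrix (Fin m) (Fin m) (MvPolynomial (Fin d) ℂ))
    (q : MvPolynomial (Fin d) ℂ)
    (hq : ∀ z : Fin d → ℂ, (∀ k, 0 < (z k).im) → MvPolynomial.eval z q ≠ 0)
    (hpos : ∀ z : Fin d → ℂ, (∀ k, 0 < (z k).im) →
        (((2 * Complex.I)⁻¹ : ℂ) •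
          (((MvPolynomial.eval z q)⁻¹ •
              Matrix.of fun i j => MvPolynomial.eval z (P i j)) -
           ((MvPolynomial.eval z q)⁻¹ •
              Matrix.of fun i j => MvPolynomial.eval z (P i j))ᴴ)).PosSemidef) :
    ∀ (P₁ P₂ : Matrix (Fin m) (Fin m) (MvPolynomial (Fin d) ℂ))
      (q₁ q₂ : MvPolynomial (Fin d) ℂ),
      P₁ = ((2 * Complex.I)⁻¹ : ℂ) •
          (P - Matrix.of fun i j => MvPolynomial.map (starRingEnd ℂ) (P j i)) →
      P₂ = ((2 : ℂ)⁻¹ : ℂ) •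
          (P + Matrix.of fun i j => MvPolynomial.map (starRingEnd ℂ) (P j i)) →
      q₁ = ((2 * Complex.I)⁻¹ : ℂ) • (q - MvPolynomial.map (starRingEnd ℂ) q) →
      q₂ = ((2 : ℂ)⁻¹ : ℂ) • (q + MvPolynomial.map (starRingEnd ℂ) q) →
      ∀ g : (Fin d → ℂ) → ℂ → Matrix (Fin m) (Fin m) ℂ,
        (∀ z w, g z w =
          (w * MvPolynomial.eval z q₁ + MvPolynomial.eval z q₂)⁻¹ •
            Matrix.of (fun i j =>
              w * MvPolynomial.eval z (P₁ i j) + MvPolynomial.eval z (P₂ i j))) →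
        -- g ∈ N_{d+1}^{m×m}: defined on Π^{d+1} with psd imaginary part
        ((∀ (z : Fin d → ℂ) (w : ℂ), (∀ k, 0 < (z k).im) → 0 < w.im →
            (w * MvPolynomial.eval z q₁ + MvPolynomial.eval z q₂) ≠ 0 ∧
            (((2 * Complex.I)⁻¹ : ℂ) • (g z w - (g z w)ᴴ)).PosSemidef) ∧
        -- Cayley inner: Hermitian values at real points where defined
         (∀ (x : Fin d → ℝ) (t : ℝ),
            ((t : ℂ) * MvPolynomial.eval (fun k => ((x k : ℝ) : ℂ)) q₁ +
              MvPolynomial.eval (fun k => ((x k : ℝ) : ℂ)) q₂) ≠ 0 →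
            (g (fun k => ((x k : ℝ) : ℂ)) (t : ℂ)).IsHermitian) ∧
        -- f(z) = g(z, i) on Π^d
         (∀ z : Fin d → ℂ, (∀ k, 0 < (z k).im) →
            (MvPolynomial.eval z q)⁻¹ •
                Matrix.of (fun i j => MvPolynomial.eval z (P i j)) =
              g z Complex.I)) := by
  rintro P₁ P₂ q₁ q₂ rfl rfl rfl rfl g hg
  have hden : ∀ z w, w * eval z (((2 * I)⁻¹ : ℂ) • (q - map (starRingEnd ℂ) q))
      + eval z ((2⁻¹ : ℂ) • (q + map (starRingEnd ℂ) q))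
      = (1 - I * w) / 2 * eval z q + (1 + I * w) / 2 * eval z (map (starRingEnd ℂ) q) := by
    intro z w
    simp only [smul_eval, map_sub, map_add, darlington_combination]
  have hg' : ∀ z w, g z w = darlingtonValue P q z ((1 - I * w) / 2) ((1 + I * w) / 2) := by
    intro z w
    rw [hg, hden, darlingtonValue]
    congr 1
    ext i j
    simp only [of_apply, Matrix.smul_apply, Matrix.sub_apply, Matrix.add_apply, smul_eval,
      smul_eq_mul, map_sub, map_add, darlington_combination]
  refine ⟨fun z w hz hw => ?_, fun x t _ => ?_, fun z _ => ?_⟩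
  · have hab := norm_one_add_I_mul_div_two_lt hw
    rw [hden, hg']
    exact ⟨mul_eval_add_mul_eval_map_conj_ne_zero hq (fun _ _ => le_rfl) hab hz,
      posSemidef_imPart_darlingtonValue hq hpos hab hz⟩
  · have hconj : (1 + I * t) / 2 = conj ((1 - I * t) / 2) := by
      rw [map_div₀, map_sub, map_one, map_mul, conj_I, conj_ofReal, map_ofNat]
      ring
    rw [hg', hconj]
    exact isHermitian_darlingtonValue_real P q x _
  · rw [hg', ← darlingtonValue_one_zero]
    norm_num [I_mul_I]

/-- Generalized Darlington theorem: for a rational matrix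
Nevanlinna function `f = P/q ∈ N_d^{m×m}` (with `P, q` coprime), the rational
function `g(z, z_{d+1}) = (z_{d+1}P₁(z) + P₂(z))/(z_{d+1}q₁(z) + q₂(z))` built
from `P₁ = (P − P(z̄)^*)/(2i)`, `P₂ = (P + P(z̄)^*)/2`, `q₁ = (q − conj q(z̄))/(2i)`,
`q₂ = (q + conj q(z̄))/2` is a Cayley inner function of class `IN_{d+1}^{m×m}`
(defined and with positive semidefinite imaginary part on the upper
poly-half-plane `Π^{d+1}`, Hermitian-valued at real points where defined), and
`f(z) = g(z, i)` on `Π^d`. -/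
theorem darlington_stmt8 (d m : ℕ)
    (P : Matrix (Fin m) (Fin m) (MvPolynomial (Fin d) ℂ))
    (q : MvPolynomial (Fin d) ℂ)
    (hcop : ∀ r : MvPolynomial (Fin d) ℂ, (∀ i j, r ∣ P i j) → r ∣ q → IsUnit r)
    (hq : ∀ z : Fin d → ℂ, (∀ k, 0 < (z k).im) → MvPolynomial.eval z q ≠ 0)
    (hpos : ∀ z : Fin d → ℂ, (∀ k, 0 < (z k).im) →
        (((2 * Complex.I)⁻¹ : ℂ) •
          (((MvPolynomial.eval z q)⁻¹ •
              Matrix.of fun i j => MvPolynomial.eval z (P i j)) -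
           ((MvPolynomial.eval z q)⁻¹ •
              Matrix.of fun i j => MvPolynomial.eval z (P i j))ᴴ)).PosSemidef) :
    ∀ (P₁ P₂ : Matrix (Fin m) (Fin m) (MvPolynomial (Fin d) ℂ))
      (q₁ q₂ : MvPolynomial (Fin d) ℂ),
      P₁ = ((2 * Complex.I)⁻¹ : ℂ) •
          (P - Matrix.of fun i j => MvPolynomial.map (starRingEnd ℂ) (P j i)) →
      P₂ = ((2 : ℂ)⁻¹ : ℂ) •
          (P + Matrix.of fun i j => MvPolynomial.map (starRingEnd ℂ) (P j i)) →
      q₁ = ((2 * Complex.I)⁻¹ : ℂ) • (q - MvPolynomial.map (starRingEnd ℂ) q) →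
      q₂ = ((2 : ℂ)⁻¹ : ℂ) • (q + MvPolynomial.map (starRingEnd ℂ) q) →
      ∀ g : (Fin d → ℂ) → ℂ → Matrix (Fin m) (Fin m) ℂ,
        (∀ z w, g z w =
          (w * MvPolynomial.eval z q₁ + MvPolynomial.eval z q₂)⁻¹ •
            Matrix.of (fun i j =>
              w * MvPolynomial.eval z (P₁ i j) + MvPolynomial.eval z (P₂ i j))) →
        -- g ∈ N_{d+1}^{m×m}: defined on Π^{d+1} with psd imaginary part
        ((∀ (z : Fin d → ℂ) (w : ℂ), (∀ k, 0 < (z k).im) → 0 < w.im →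
            (w * MvPolynomial.eval z q₁ + MvPolynomial.eval z q₂) ≠ 0 ∧
            (((2 * Complex.I)⁻¹ : ℂ) • (g z w - (g z w)ᴴ)).PosSemidef) ∧
        -- Cayley inner: Hermitian values at real points where defined
         (∀ (x : Fin d → ℝ) (t : ℝ),
            ((t : ℂ) * MvPolynomial.eval (fun k => ((x k : ℝ) : ℂ)) q₁ +
              MvPolynomial.eval (fun k => ((x k : ℝ) : ℂ)) q₂) ≠ 0 →
            (g (fun k => ((x k : ℝ) : ℂ)) (t : ℂ)).IsHermitian) ∧
        -- f(z) = g(z, i) on Π^d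
         (∀ z : Fin d → ℂ, (∀ k, 0 < (z k).im) →
            (MvPolynomial.eval z q)⁻¹ •
                Matrix.of (fun i j => MvPolynomial.eval z (P i j)) =
              g z Complex.I)) :=
  darlington_stmt8_general d m P q hq hpos
end

section
/- Let a, b, c, d be scalar rational functions of one variable such that Z(λ) = [[a(λ), b(λ)],[c(λ), d(λ)]] is a 2×2 positive real Cayley inner matrix function (Re Z(λ) ⪰ 0 for Re λ > 0, and Re Z vanishes on the imaginary axis). Then the function of two variables g(λ, μ) = a(λ) − b(λ)(d(λ) + μ)^{-1} c(λ) is positive real and Cayley inner on the right bi-half-plane Ω² = {(λ, μ) : Re λ > 0, Re μ > 0}; in particular, for any constant r > 0, the one-variable function z(λ) = g(λ, r) is positive real. -/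
open Complex Matrix
open scoped ComplexOrder

/-- A function `ℂ → ℂ` is rational if it agrees with a quotient of polynomials
wherever the denominator does not vanish. -/
def IsRationalFn (f : ℂ → ℂ) : Prop :=
  ∃ p q : Polynomial ℂ, q ≠ 0 ∧
    ∀ l : ℂ, q.eval l ≠ 0 → f l = p.eval l / q.eval l

/-!
With `w = -(d + μ)⁻¹ c`, i.e. `(d + μ) w = -c`, the Schur complement is the value of the
quadratic form of `Z = [[a, b], [c, d]]` at `(1, w)` plus `μ |w|²`:
`a - b (d + μ)⁻¹ c = ⟨(1, w), Z (1, w)⟩ + μ |w|²`.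
Taking real parts, `Re g = ⟨(1, w), (Re Z) (1, w)⟩ + Re μ · |w|²`, which is `≥ 0` when
`Re Z ⪰ 0` and `Re μ ≥ 0`, and `= 0` when `Re Z = 0` and `Re μ = 0`.
-/

section QuadraticForm

variable {n : Type*} [Fintype n] {M : Matrix n n ℂ}

theorem star_dotProduct_add_conjTranspose_mulVec (M : Matrix n n ℂ) (v : n → ℂ) :
    star v ⬝ᵥ (M + Mᴴ) *ᵥ v = 2 * ((star v ⬝ᵥ M *ᵥ v).re : ℂ) := by
  have h : star v ⬝ᵥ Mᴴ *ᵥ v = starRingEnd ℂ (star v ⬝ᵥ M *ᵥ v) := by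
    rw [dotProduct_mulVec, ← star_mulVec, star_dotProduct, star_def]
  rw [add_mulVec, dotProduct_add, h, add_conj]
  push_cast
  ring

theorem re_star_dotProduct_mulVec_nonneg (hM : ((2 : ℂ)⁻¹ • (M + Mᴴ)).PosSemidef)
    (v : n → ℂ) : 0 ≤ (star v ⬝ᵥ M *ᵥ v).re := by
  have h := hM.dotProduct_mulVec_nonneg v
  rw [smul_mulVec, dotProduct_smul, star_dotProduct_add_conjTranspose_mulVec, smul_eq_mul,
    inv_mul_cancel_left₀ two_ne_zero] at h
  exact_mod_cast h

theorem re_star_dotProduct_mulVec_eq_zero (hM : M + Mᴴ = 0) (v : n → ℂ) :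
    (star v ⬝ᵥ M *ᵥ v).re = 0 := by
  have h := star_dotProduct_add_conjTranspose_mulVec M v
  rw [hM, zero_mulVec, dotProduct_zero] at h
  exact_mod_cast (mul_eq_zero.mp h.symm).resolve_left two_ne_zero

end QuadraticForm

theorem re_schur_complement_eq (a b c d μ : ℂ) (h : d + μ ≠ 0) :
    (a - b * (d + μ)⁻¹ * c).re =
      (star ![1, -(d + μ)⁻¹ * c] ⬝ᵥ !![a, b; c, d] *ᵥ ![1, -(d + μ)⁻¹ * c]).re +
        μ.re * normSq (-(d + μ)⁻¹ * c) := by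
  set w := -(d + μ)⁻¹ * c with hw_def
  have hw : (d + μ) * w = -c := by rw [hw_def]; field_simp
  have key : a - b * (d + μ)⁻¹ * c =
      star ![1, w] ⬝ᵥ !![a, b; c, d] *ᵥ ![1, w] + μ * (starRingEnd ℂ w * w) := by
    simp only [dotProduct, mulVec, Fin.sum_univ_two, Pi.star_apply, RCLike.star_def, of_apply,
      cons_val', cons_val_fin_one, cons_val_zero, cons_val_one, map_one, mul_one, one_mul]
    linear_combination (-(starRingEnd ℂ) w) * hw
  rw [key, add_re, ← normSq_eq_conj_mul_self, re_mul_ofReal]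

theorem re_schur_complement_nonneg {a b c d μ : ℂ}
    (hZ : ((2 : ℂ)⁻¹ • (!![a, b; c, d] + (!![a, b; c, d])ᴴ)).PosSemidef)
    (hμ : 0 ≤ μ.re) (h : d + μ ≠ 0) : 0 ≤ (a - b * (d + μ)⁻¹ * c).re := by
  rw [re_schur_complement_eq a b c d μ h]
  exact add_nonneg (re_star_dotProduct_mulVec_nonneg hZ _) (mul_nonneg hμ (normSq_nonneg _))

theorem re_schur_complement_eq_zero {a b c d μ : ℂ}
    (hZ : !![a, b; c, d] + (!![a, b; c, d])ᴴ = 0)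
    (hμ : μ.re = 0) (h : d + μ ≠ 0) : (a - b * (d + μ)⁻¹ * c).re = 0 := by
  rw [re_schur_complement_eq a b c d μ h, re_star_dotProduct_mulVec_eq_zero hZ, hμ,
    zero_mul, add_zero]

theorem darlington_stmt11_general (a b c d : ℂ → ℂ)
    (hpos : ∀ l : ℂ, 0 < l.re →
        (((2 : ℂ)⁻¹ : ℂ) • (!![a l, b l; c l, d l] +
          (!![a l, b l; c l, d l])ᴴ)).PosSemidef)
    (hinner : ∀ t : ℝ,
        !![a ((t : ℂ) * Complex.I), b ((t : ℂ) * Complex.I);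
           c ((t : ℂ) * Complex.I), d ((t : ℂ) * Complex.I)] +
        (!![a ((t : ℂ) * Complex.I), b ((t : ℂ) * Complex.I);
            c ((t : ℂ) * Complex.I), d ((t : ℂ) * Complex.I)])ᴴ = 0) :
    -- g is positive real on the right bi-half-plane
    ((∀ l mu : ℂ, 0 < l.re → 0 < mu.re → d l + mu ≠ 0 →
        0 ≤ (a l - b l * (d l + mu)⁻¹ * c l).re) ∧
    -- g is Cayley inner: Re g = 0 at purely imaginary points where defined
     (∀ s t : ℝ, d ((s : ℂ) * Complex.I) + (t : ℂ) * Complex.I ≠ 0 →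
        (a ((s : ℂ) * Complex.I) -
          b ((s : ℂ) * Complex.I) *
            (d ((s : ℂ) * Complex.I) + (t : ℂ) * Complex.I)⁻¹ *
              c ((s : ℂ) * Complex.I)).re = 0) ∧
    -- in particular, l ↦ g(l, r) is positive real for each r > 0
     (∀ r : ℝ, 0 < r → ∀ l : ℂ, 0 < l.re → d l + (r : ℂ) ≠ 0 →
        0 ≤ (a l - b l * (d l + (r : ℂ))⁻¹ * c l).re)) :=
  ⟨fun l _ hl hμ h => re_schur_complement_nonneg (hpos l hl) hμ.le h,
   fun s _ h => re_schur_complement_eq_zero (hinner s) (by simp) h,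
   fun _ hr l hl h => re_schur_complement_nonneg (hpos l hl) (by simpa using hr.le) h⟩

/-- Darlington, classical form: if
`Z(l) = [[a(l), b(l)], [c(l), d(l)]]` is a `2×2` positive real Cayley inner
rational matrix function, then the Schur complement
`g(l, mu) = a(l) − b(l)(d(l) + mu)⁻¹ c(l)` is positive real and Cayley inner on
the right bi-half-plane, and in particular `l ↦ g(l, r)` is positive real for
every constant `r > 0`. -/
theorem darlington_stmt11 (a b c d : ℂ → ℂ)
    (hra : IsRationalFn a) (hrb : IsRationalFn b)
    (hrc : IsRationalFn c) (hrd : IsRationalFn d)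
    (hpos : ∀ l : ℂ, 0 < l.re →
        (((2 : ℂ)⁻¹ : ℂ) • (!![a l, b l; c l, d l] +
          (!![a l, b l; c l, d l])ᴴ)).PosSemidef)
    (hinner : ∀ t : ℝ,
        !![a ((t : ℂ) * Complex.I), b ((t : ℂ) * Complex.I);
           c ((t : ℂ) * Complex.I), d ((t : ℂ) * Complex.I)] +
        (!![a ((t : ℂ) * Complex.I), b ((t : ℂ) * Complex.I);
            c ((t : ℂ) * Complex.I), d ((t : ℂ) * Complex.I)])ᴴ = 0) :
    -- g is positive real on the right bi-half-plane
    ((∀ l mu : ℂ, 0 < l.re → 0 < mu.re → d l + mu ≠ 0 →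
        0 ≤ (a l - b l * (d l + mu)⁻¹ * c l).re) ∧
    -- g is Cayley inner: Re g = 0 at purely imaginary points where defined
     (∀ s t : ℝ, d ((s : ℂ) * Complex.I) + (t : ℂ) * Complex.I ≠ 0 →
        (a ((s : ℂ) * Complex.I) -
          b ((s : ℂ) * Complex.I) *
            (d ((s : ℂ) * Complex.I) + (t : ℂ) * Complex.I)⁻¹ *
              c ((s : ℂ) * Complex.I)).re = 0) ∧
    -- in particular, l ↦ g(l, r) is positive real for each r > 0
     (∀ r : ℝ, 0 < r → ∀ l : ℂ, 0 < l.re → d l + (r : ℂ) ≠ 0 →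
        0 ≤ (a l - b l * (d l + (r : ℂ))⁻¹ * c l).re)) :=
  darlington_stmt11_general a b c d hpos hinner
end
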